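/- arXiv:2602.08965 — 6 statements merged into one kernel-verified Lean document; each statement's English description precedes it below -/
import Mathlib

section
/- Let n ≥ 1 and let H_1, ..., H_n and A_1, ..., A_n be finite nonempty sets, with H = H_1 × ... × H_n and A = A_1 × ... × A_n. Regard joint policies as elements of the real vector space of functions H × A → ℝ. A joint policy π is factorized if there exist functions π_i : H_i → Δ(A_i) with π(h)(a) = Π_{i=1}^n π_i(h_i)(a_i) for all h ∈ H, a ∈ A. A joint policy π is a shared-randomness policy if there exist a finite nonempty set X, a probability distribution q ∈ Δ(X), and functions π_i : X × H_i → Δ(A_i) such that π(h)(a) = Σ_{x∈X} q(x) Π_{i=1}^n π_i(x, h_i)(a_i) for all h, a. Then the set of shared-randomness policies equals the convex hull (in the function space ℝ^{H×A}) of the set of factorized policies. -/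
/-!
A shared-randomness policy with randomness `q` on `X` is the mixture `∑ x, q x • π_x` of the
factorized policies `π_x(h)(a) = ∏ i, p i x (h i) (a i)`, and conversely every finite mixture of
factorized policies arises this way after choosing factors for each of them. Finite mixtures of
points of a set are exactly its convex hull.
-/

/-- A probability mass function on a finite type `Y`. -/
def IsPMF {Y : Type*} [Fintype Y] (p : Y → ℝ) : Prop :=
  (∀ y, 0 ≤ p y) ∧ ∑ y, p y = 1

theorem mem_convexHull_iff_exists_isPMF {E : Type*} [AddCommGroup E] [Module ℝ E] {s : Set E}
    {y : E} :
    y ∈ convexHull ℝ s ↔ ∃ (X : Type) (_ : Fintype X) (_ : Nonempty X) (q : X → ℝ) (f : X → E),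
      IsPMF q ∧ (∀ x, f x ∈ s) ∧ ∑ x, q x • f x = y := by
  rw [mem_convexHull_iff_exists_fintype]
  constructor
  · rintro ⟨X, _, q, f, hq₀, hq₁, hf, rfl⟩
    have hX : Nonempty X :=
      Finset.univ_nonempty_iff.mp (Finset.nonempty_of_sum_ne_zero (hq₁ ▸ one_ne_zero))
    exact ⟨X, _, hX, q, f, ⟨hq₀, hq₁⟩, hf, rfl⟩
  · rintro ⟨X, _, _, q, f, hq, hf, rfl⟩
    exact ⟨X, _, q, f, hq.1, hq.2, hf, rfl⟩

theorem sharedRandomness_eq_convexHull_factorized_general (n : ℕ)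
    (H A : Fin n → Type) [∀ i, Fintype (H i)]
    [∀ i, Fintype (A i)] :
    {π : ((∀ i, H i) × (∀ i, A i)) → ℝ |
      ∃ (X : Type) (_ : Fintype X) (_ : Nonempty X) (q : X → ℝ)
        (p : ∀ i, X → H i → A i → ℝ),
        IsPMF q ∧ (∀ i x h, IsPMF (p i x h)) ∧
        ∀ z : (∀ i, H i) × (∀ i, A i), π z = ∑ x, q x * ∏ i, p i x (z.1 i) (z.2 i)} =
    convexHull ℝ
      {π : ((∀ i, H i) × (∀ i, A i)) → ℝ |
        ∃ p : ∀ i, H i → A i → ℝ, (∀ i h, IsPMF (p i h)) ∧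
          ∀ z : (∀ i, H i) × (∀ i, A i), π z = ∏ i, p i (z.1 i) (z.2 i)} := by
  ext π
  rw [Set.mem_ofPred_eq, mem_convexHull_iff_exists_isPMF]
  constructor
  · rintro ⟨X, _, _, q, p, hq, hp, hπ⟩
    refine ⟨X, _, ‹_›, q, fun x z => ∏ i, p i x (z.1 i) (z.2 i), hq,
      fun x => ⟨fun i => p i x, fun i => hp i x, fun _ => rfl⟩, ?_⟩
    funext z
    simp [Finset.sum_apply, hπ z]
  · rintro ⟨X, _, _, q, f, hq, hf, rfl⟩
    choose p hp hfp using hf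
    refine ⟨X, _, ‹_›, q, fun i x => p x i, hq, fun i x => hp x i, fun z => ?_⟩
    simp [Finset.sum_apply, hfp]

/-- for `n ≥ 1` and finite nonempty sets `H i`, `A i`, the set of
shared-randomness joint policies (regarded as elements of the real vector space
`ℝ^{H×A}` of functions `(∀ i, H i) × (∀ i, A i) → ℝ`) equals the convex hull of the
set of factorized joint policies. -/
theorem sharedRandomness_eq_convexHull_factorized (n : ℕ) (hn : 1 ≤ n)
    (H A : Fin n → Type) [∀ i, Fintype (H i)] [∀ i, Nonempty (H i)]
    [∀ i, Fintype (A i)] [∀ i, Nonempty (A i)] :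
    {π : ((∀ i, H i) × (∀ i, A i)) → ℝ |
      ∃ (X : Type) (_ : Fintype X) (_ : Nonempty X) (q : X → ℝ)
        (p : ∀ i, X → H i → A i → ℝ),
        IsPMF q ∧ (∀ i x h, IsPMF (p i x h)) ∧
        ∀ z : (∀ i, H i) × (∀ i, A i), π z = ∑ x, q x * ∏ i, p i x (z.1 i) (z.2 i)} =
    convexHull ℝ
      {π : ((∀ i, H i) × (∀ i, A i)) → ℝ |
        ∃ p : ∀ i, H i → A i → ℝ, (∀ i h, IsPMF (p i h)) ∧
          ∀ z : (∀ i, H i) × (∀ i, A i), π z = ∏ i, p i (z.1 i) (z.2 i)} :=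
  sharedRandomness_eq_convexHull_factorized_general n H A
end

section
/- Let n ≥ 1 and let H_1, ..., H_n and A_1, ..., A_n be finite nonempty sets, with H = H_1 × ... × H_n and A = A_1 × ... × A_n. Call a joint policy π : H × A → ℝ a deterministic factorized policy if there exist functions f_i : H_i → A_i such that π(h)(a) = Π_{i=1}^n 1[a_i = f_i(h_i)]. Then: (i) the set of deterministic factorized policies is finite, of cardinality Π_{i=1}^n |A_i|^{|H_i|}; and (ii) the set of shared-randomness policies equals the convex hull in ℝ^{H×A} of the set of deterministic factorized policies; in particular, the set of shared-randomness policies is a convex polytope (the convex hull of a finite set of points). -/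
set_option maxHeartbeats 1000000


open scoped Classical

/-- The set of deterministic factorized joint policies:
`π(h)(a) = ∏ i, 1[a i = f i (h i)]` for some functions `f i : H i → A i`. -/
def detFactorizedSet (n : ℕ) (H A : Fin n → Type) [∀ i, Fintype (H i)]
    [∀ i, Fintype (A i)] : Set (((∀ i, H i) × (∀ i, A i)) → ℝ) :=
  {π | ∃ f : ∀ i, H i → A i,
    ∀ z : (∀ i, H i) × (∀ i, A i), π z = ∏ i, if z.2 i = f i (z.1 i) then (1 : ℝ) else 0}

/-- Single-agent marginalization: summing a product policy against the indicator of
a deterministic choice recovers the stochastic policy. -/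
lemma single_sum {Hi Ai : Type} [Fintype Hi] [Fintype Ai] (p : Hi → Ai → ℝ)
    (hp : ∀ h, ∑ a, p h a = 1) (h0 : Hi) (a0 : Ai) :
    ∑ g : Hi → Ai, (∏ h, p h (g h)) * (if a0 = g h0 then (1 : ℝ) else 0) = p h0 a0 := by
  have step : ∀ g : Hi → Ai, (∏ h, p h (g h)) * (if a0 = g h0 then (1 : ℝ) else 0)
      = ∏ h, (p h (g h) * (if h = h0 then (if a0 = g h then (1 : ℝ) else 0) else 1)) := by
    intro g
    rw [Finset.prod_mul_distrib]
    congr 1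
    rw [Finset.prod_ite_eq' Finset.univ h0 (fun h => if a0 = g h then (1 : ℝ) else 0)]
    simp
  calc ∑ g : Hi → Ai, (∏ h, p h (g h)) * (if a0 = g h0 then (1 : ℝ) else 0)
      = ∑ g : Hi → Ai, ∏ h,
          (p h (g h) * (if h = h0 then (if a0 = g h then (1 : ℝ) else 0) else 1)) := by
        exact Finset.sum_congr rfl fun g _ => step g
    _ = ∏ h, ∑ b, (p h b * (if h = h0 then (if a0 = b then (1 : ℝ) else 0) else 1)) :=
        (Fintype.prod_sum (fun (h : Hi) (b : Ai) =>
          p h b * (if h = h0 then (if a0 = b then (1 : ℝ) else 0) else 1))).symm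
    _ = ∏ h, (if h = h0 then p h0 a0 else 1) := by
        refine Finset.prod_congr rfl fun h _ => ?_
        split_ifs with hh
        · subst hh
          simp [mul_ite, mul_one, mul_zero, Finset.sum_ite_eq]
        · simp [hp h]
    _ = p h0 a0 := by
        rw [Finset.prod_ite_eq' Finset.univ h0 (fun _ => p h0 a0)]
        simp

/-- Multi-agent marginalization. -/
lemma multi_sum {n : ℕ} (H A : Fin n → Type) [∀ i, Fintype (H i)] [∀ i, Fintype (A i)]
    (p : ∀ i, H i → A i → ℝ) (hp : ∀ i h, ∑ a, p i h a = 1)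
    (h : ∀ i, H i) (a : ∀ i, A i) :
    ∑ f : ∀ i, H i → A i,
      (∏ i, ∏ h', p i h' (f i h')) * (∏ i, if a i = f i (h i) then (1 : ℝ) else 0)
      = ∏ i, p i (h i) (a i) := by
  have : ∀ f : ∀ i, H i → A i,
      (∏ i, ∏ h', p i h' (f i h')) * (∏ i, if a i = f i (h i) then (1 : ℝ) else 0)
      = ∏ i, ((∏ h', p i h' (f i h')) * (if a i = f i (h i) then (1 : ℝ) else 0)) := by
    intro f; rw [Finset.prod_mul_distrib]
  calc ∑ f : ∀ i, H i → A i,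
        (∏ i, ∏ h', p i h' (f i h')) * (∏ i, if a i = f i (h i) then (1 : ℝ) else 0)
      = ∑ f : ∀ i, H i → A i,
        ∏ i, ((∏ h', p i h' (f i h')) * (if a i = f i (h i) then (1 : ℝ) else 0)) :=
        Finset.sum_congr rfl fun f _ => this f
    _ = ∏ i, ∑ g : H i → A i,
        ((∏ h', p i h' (g h')) * (if a i = g (h i) then (1 : ℝ) else 0)) :=
        (Fintype.prod_sum (fun (i : Fin n) (g : H i → A i) =>
          (∏ h', p i h' (g h')) * (if a i = g (h i) then (1 : ℝ) else 0))).symm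
    _ = ∏ i, p i (h i) (a i) :=
        Finset.prod_congr rfl fun i _ => single_sum (p i) (hp i) (h i) (a i)

/-- The total weight of the product distribution on deterministic policies is 1. -/
lemma weight_sum {n : ℕ} (H A : Fin n → Type) [∀ i, Fintype (H i)] [∀ i, Fintype (A i)]
    (p : ∀ i, H i → A i → ℝ) (hp : ∀ i h, ∑ a, p i h a = 1) :
    ∑ f : ∀ i, H i → A i, ∏ i, ∏ h', p i h' (f i h') = 1 := by
  rw [← Fintype.prod_sum (fun i (g : H i → A i) => ∏ h', p i h' (g h'))]
  refine Finset.prod_eq_one fun i _ => ?_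
  rw [← Fintype.prod_sum (fun (h' : H i) (a : A i) => p i h' a)]
  exact Finset.prod_eq_one fun h' _ => hp i h'

/-- (i) the set of deterministic factorized policies is finite with
cardinality `∏ i, |A i| ^ |H i|`; (ii) the set of shared-randomness policies equals the
convex hull in `ℝ^{H×A}` of the set of deterministic factorized policies; in particular
it is a convex polytope (a convex hull of finitely many points). -/
theorem sharedRandomness_eq_convexHull_deterministic (n : ℕ) (hn : 1 ≤ n)
    (H A : Fin n → Type) [∀ i, Fintype (H i)] [∀ i, Nonempty (H i)]
    [∀ i, Fintype (A i)] [∀ i, Nonempty (A i)] :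
    (detFactorizedSet n H A).Finite ∧
    (detFactorizedSet n H A).ncard = ∏ i, Fintype.card (A i) ^ Fintype.card (H i) ∧
    {π : ((∀ i, H i) × (∀ i, A i)) → ℝ |
      ∃ (X : Type) (_ : Fintype X) (_ : Nonempty X) (q : X → ℝ)
        (p : ∀ i, X → H i → A i → ℝ),
        IsPMF q ∧ (∀ i x h, IsPMF (p i x h)) ∧
        ∀ z : (∀ i, H i) × (∀ i, A i), π z = ∑ x, q x * ∏ i, p i x (z.1 i) (z.2 i)} =
      convexHull ℝ (detFactorizedSet n H A) := by
  set Φ : (∀ i, H i → A i) → (((∀ i, H i) × (∀ i, A i)) → ℝ) :=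
    fun f z => ∏ i, if z.2 i = f i (z.1 i) then (1 : ℝ) else 0 with hΦ
  have hrange : detFactorizedSet n H A = Set.range Φ := by
    ext π
    constructor
    · rintro ⟨f, hf⟩; exact ⟨f, by funext z; exact (hf z).symm⟩
    · rintro ⟨f, rfl⟩; exact ⟨f, fun z => rfl⟩
  have hinj : Function.Injective Φ := by
    intro f g hfg
    funext i h
    set hbar : ∀ j, H j := Function.update (fun j => Classical.arbitrary (H j)) i h with hhbar
    have h1 : Φ f (hbar, fun j => f j (hbar j)) = 1 := by
      simp [hΦ]
    have h2 : Φ g (hbar, fun j => f j (hbar j)) = 1 := by rw [← hfg]; exact h1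
    have h3 : (∏ j, if f j (hbar j) = g j (hbar j) then (1 : ℝ) else 0) = 1 := h2
    have h4 : (if f i (hbar i) = g i (hbar i) then (1 : ℝ) else 0) ≠ 0 := by
      intro h0
      rw [Finset.prod_eq_zero (Finset.mem_univ i) h0] at h3
      exact one_ne_zero h3.symm
    have h5 : f i (hbar i) = g i (hbar i) := by
      by_contra hne; simp [hne] at h4
    have h6 : hbar i = h := by simp [hhbar]
    rw [h6] at h5
    exact h5
  have hfin : (detFactorizedSet n H A).Finite := by
    rw [hrange]; exact Set.finite_range Φ
  refine ⟨hfin, ?_, ?_⟩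
  · rw [hrange, ← Set.image_univ, Set.ncard_image_of_injective _ hinj, Set.ncard_univ,
      Nat.card_eq_fintype_card, Fintype.card_pi]
    exact Finset.prod_congr rfl fun i _ => Fintype.card_fun
  · ext π
    constructor
    · rintro ⟨X, _, _, q, p, hq, hp, hπ⟩
      refine mem_convexHull_of_exists_fintype
        (ι := X × (∀ i, H i → A i))
        (fun xf => q xf.1 * ∏ i, ∏ h', p i xf.1 h' (xf.2 i h'))
        (fun xf => Φ xf.2) ?_ ?_ ?_ ?_
      · intro xf
        exact mul_nonneg (hq.1 _)
          (Finset.prod_nonneg fun i _ => Finset.prod_nonneg fun h' _ => (hp i xf.1 h').1 _)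
      · rw [Fintype.sum_prod_type]
        have : ∀ x : X, ∑ f : ∀ i, H i → A i,
            q x * ∏ i, ∏ h', p i x h' (f i h') = q x := by
          intro x
          rw [← Finset.mul_sum, weight_sum H A (fun i h' => p i x h') (fun i h' => (hp i x h').2),
            mul_one]
        rw [Finset.sum_congr rfl fun x _ => this x]
        exact hq.2
      · intro xf
        rw [hrange]; exact ⟨xf.2, rfl⟩
      · funext z
        simp only [Finset.sum_apply, Pi.smul_apply, smul_eq_mul]
        rw [Fintype.sum_prod_type, hπ z]
        refine Finset.sum_congr rfl fun x _ => ?_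
        rw [← multi_sum H A (fun i h' => p i x h') (fun i h' => (hp i x h').2) z.1 z.2,
          Finset.mul_sum]
        exact Finset.sum_congr rfl fun f _ => by rw [mul_assoc]
    · intro hmem
      rw [mem_convexHull_iff_exists_fintype] at hmem
      obtain ⟨ι, hι, w, z, hw0, hw1, hz, hx⟩ := hmem
      have hne : Nonempty ι := by
        rcases isEmpty_or_nonempty ι with he | hne
        · rw [Finset.univ_eq_empty, Finset.sum_empty] at hw1
          exact absurd hw1 zero_ne_one
        · exact hne
      choose f hf using fun x => hz x
      refine ⟨ι, hι, hne, w, fun i x h a => if a = f x i h then (1 : ℝ) else 0,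
        ⟨hw0, hw1⟩, ?_, ?_⟩
      · intro i x h
        constructor
        · intro a; dsimp only; split_ifs <;> norm_num
        · simp [Finset.sum_ite_eq' Finset.univ (f x i h) (fun _ => (1 : ℝ))]
      · intro zz
        have := congrFun hx zz
        simp only [Finset.sum_apply, Pi.smul_apply, smul_eq_mul] at this
        rw [← this]
        refine Finset.sum_congr rfl fun x _ => ?_
        rw [hf x zz]
end

section
/- Define the 4×4 density matrix ρ_Bell with entries ρ_Bell[1,1] = ρ_Bell[1,4] = ρ_Bell[4,1] = ρ_Bell[4,4] = 1/2 and all other entries 0. Let θ = π/8. Define the 2×2 matrices: M(0|0) = [[1,0],[0,0]], M(1|0) = [[0,0],[0,1]], M(0|1) = [[1/2,1/2],[1/2,1/2]], M(1|1) = [[1/2,−1/2],[−1/2,1/2]]; and N(0|0) = [[cos²θ, cosθ·sinθ],[cosθ·sinθ, sin²θ]], N(1|0) = I_2 − N(0|0), N(0|1) = [[cos²θ, −cosθ·sinθ],[−cosθ·sinθ, sin²θ]], N(1|1) = I_2 − N(0|1). Then for every x, y ∈ {0,1}, the pairs (M(0|x), M(1|x)) and (N(0|y), N(1|y)) are POVMs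 on ℂ², and for every (x,y) ∈ {0,1}²: Σ_{(a,b)∈{0,1}² : a XOR b = x AND y} tr(ρ_Bell (M(a|x) ⊗ N(b|y))) = cos²(π/8). In particular, with questions (x,y) drawn uniformly from {0,1}², this shared-entanglement strategy wins the CHSH game with probability cos²(π/8). -/
open scoped ComplexOrder Kronecker
open Matrix

/-- The Bell state: the 4×4 density matrix (indexed by `Fin 2 × Fin 2` in the standard
Kronecker ordering, so that the 1-based positions (1,1), (1,4), (4,1), (4,4) carry the
entry 1/2) with all other entries 0. -/
noncomputable def rhoBell : Matrix (Fin 2 × Fin 2) (Fin 2 × Fin 2) ℂ :=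
  Matrix.of fun i j =>
    if (i = (0, 0) ∨ i = (1, 1)) ∧ (j = (0, 0) ∨ j = (1, 1)) then (1 / 2 : ℂ) else 0

/-- Alice's CHSH measurements `M(a|x)`. -/
noncomputable def chshM (a x : Fin 2) : Matrix (Fin 2) (Fin 2) ℂ :=
  if x = 0 then
    if a = 0 then !![1, 0; 0, 0] else !![0, 0; 0, 1]
  else
    if a = 0 then !![1/2, 1/2; 1/2, 1/2] else !![1/2, -(1/2); -(1/2), 1/2]

/-- Bob's CHSH measurements `N(b|y)`, with `θ = π/8`. -/
noncomputable def chshN (b y : Fin 2) : Matrix (Fin 2) (Fin 2) ℂ :=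
  let c : ℂ := Real.cos (Real.pi / 8)
  let s : ℂ := Real.sin (Real.pi / 8)
  if y = 0 then
    if b = 0 then !![c ^ 2, c * s; c * s, s ^ 2]
    else 1 - !![c ^ 2, c * s; c * s, s ^ 2]
  else
    if b = 0 then !![c ^ 2, -(c * s); -(c * s), s ^ 2]
    else 1 - !![c ^ 2, -(c * s); -(c * s), s ^ 2]

noncomputable def outer (p q : ℝ) : Matrix (Fin 2) (Fin 2) ℂ :=
  !![(p:ℂ)*p, p*q; q*p, q*q]


lemma outer_eq (p q : ℝ) :
    (!![(p:ℂ), q] : Matrix (Fin 1) (Fin 2) ℂ)ᴴ * !![(p:ℂ), q] = outer p q := by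
  ext i j
  fin_cases i <;> fin_cases j <;>
    simp [Matrix.mul_apply, outer, Fin.sum_univ_succ, Complex.conj_ofReal]

lemma outer_psd (p q : ℝ) : (outer p q).PosSemidef := by
  rw [← outer_eq]
  exact Matrix.posSemidef_conjTranspose_mul_self _

noncomputable abbrev rr : ℝ := Real.sqrt (1/2)

lemma hr2 : ((Real.sqrt 2 : ℝ) : ℂ) * ((Real.sqrt 2 : ℝ) : ℂ) = 2 := by
  rw [← Complex.ofReal_mul, Real.mul_self_sqrt (by norm_num)]; norm_num

lemma hpyth : ((Real.cos (Real.pi/8):ℝ):ℂ)^2 + ((Real.sin (Real.pi/8):ℝ):ℂ)^2 = 1 := by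
  have h : Real.cos (Real.pi/8)^2 + Real.sin (Real.pi/8)^2 = (1:ℝ) := by
    have := Real.sin_sq_add_cos_sq (Real.pi/8); linarith
  rw [← Complex.ofReal_pow, ← Complex.ofReal_pow, ← Complex.ofReal_add, h, Complex.ofReal_one]

lemma chshM00 : chshM 0 0 = outer 1 0 := by
  ext i j; fin_cases i <;> fin_cases j <;> simp [chshM, outer]
lemma chshM10 : chshM 1 0 = outer 0 1 := by
  ext i j; fin_cases i <;> fin_cases j <;> simp [chshM, outer]
lemma chshM01 : chshM 0 1 = outer rr rr := by
  ext i j; fin_cases i <;> fin_cases j <;> simp [chshM, outer] <;>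
    rw [← mul_inv, hr2]
lemma chshM11 : chshM 1 1 = outer rr (-rr) := by
  ext i j; fin_cases i <;> fin_cases j <;>
    simp [chshM, outer, neg_mul, mul_neg] <;> rw [← mul_inv, hr2]

lemma chshN00 : chshN 0 0 = outer (Real.cos (Real.pi/8)) (Real.sin (Real.pi/8)) := by
  ext i j; fin_cases i <;> fin_cases j <;>
    simp [chshN, outer, sq, -Real.cos_pi_div_eight, -Real.sin_pi_div_eight, -Complex.ofReal_cos, -Complex.ofReal_sin] <;> ring
lemma chshN01 : chshN 0 1 = outer (Real.cos (Real.pi/8)) (-Real.sin (Real.pi/8)) := by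
  ext i j; fin_cases i <;> fin_cases j <;>
    simp [chshN, outer, sq, -Real.cos_pi_div_eight, -Real.sin_pi_div_eight, -Complex.ofReal_cos, -Complex.ofReal_sin] <;> ring
lemma chshN10 : chshN 1 0 = outer (Real.sin (Real.pi/8)) (-Real.cos (Real.pi/8)) := by
  ext i j; fin_cases i <;> fin_cases j <;>
    simp [chshN, outer, Matrix.one_apply, sq,
      -Real.cos_pi_div_eight, -Real.sin_pi_div_eight, -Complex.ofReal_cos, -Complex.ofReal_sin] <;> first
      | ring1
      | linear_combination hpyth
      | linear_combination -hpyth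
      | linear_combination 2 * hpyth
      | linear_combination 3 * hpyth
lemma chshN11 : chshN 1 1 = outer (Real.sin (Real.pi/8)) (Real.cos (Real.pi/8)) := by
  ext i j; fin_cases i <;> fin_cases j <;>
    simp [chshN, outer, Matrix.one_apply, sq,
      -Real.cos_pi_div_eight, -Real.sin_pi_div_eight, -Complex.ofReal_cos, -Complex.ofReal_sin] <;> first
      | ring1
      | linear_combination hpyth
      | linear_combination -hpyth
      | linear_combination 2 * hpyth
      | linear_combination 3 * hpyth


lemma trace_rho (A B : Matrix (Fin 2) (Fin 2) ℂ) :
    (rhoBell * (A ⊗ₖ B)).trace =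
      (A 0 0 * B 0 0 + A 0 1 * B 0 1 + A 1 0 * B 1 0 + A 1 1 * B 1 1) / 2 := by
  simp [Matrix.trace, Matrix.mul_apply, rhoBell, Matrix.diag, Fintype.sum_prod_type,
    Fin.sum_univ_two, Matrix.kroneckerMap_apply]
  ring

lemma rho_trace_one : rhoBell.trace = 1 := by
  simp [Matrix.trace, rhoBell, Matrix.diag, Fintype.sum_prod_type, Fin.sum_univ_two]
  norm_num

noncomputable def bvec : Matrix (Fin 1) (Fin 2 × Fin 2) ℂ :=
  Matrix.of fun _ j => if j = (0,0) ∨ j = (1,1) then (((Real.sqrt 2)⁻¹ : ℝ) : ℂ) else 0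

lemma rho_eq : bvecᴴ * bvec = rhoBell := by
  ext i j
  obtain ⟨i1, i2⟩ := i; obtain ⟨j1, j2⟩ := j
  fin_cases i1 <;> fin_cases i2 <;> fin_cases j1 <;> fin_cases j2 <;>
    simp [bvec, rhoBell, Matrix.mul_apply, Matrix.conjTranspose_apply, Fin.sum_univ_one,
      Complex.conj_ofReal] <;> rw [← mul_inv, hr2]

lemma rho_psd : rhoBell.PosSemidef := by
  rw [← rho_eq]; exact Matrix.posSemidef_conjTranspose_mul_self _

lemma chshM_sum (x : Fin 2) : chshM 0 x + chshM 1 x = 1 := by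
  fin_cases x <;> ext i j <;> fin_cases i <;> fin_cases j <;>
    simp [chshM, Matrix.one_apply] <;> norm_num

lemma chshN_sum (y : Fin 2) : chshN 0 y + chshN 1 y = 1 := by
  fin_cases y <;> ext i j <;> fin_cases i <;> fin_cases j <;>
    simp [chshN, Matrix.one_apply]

lemma hkeyR : 2 * Real.sin (Real.pi/8) * Real.cos (Real.pi/8)
    = 2 * Real.cos (Real.pi/8)^2 - 1 := by
  have h1 : Real.sin (Real.pi/4) = 2 * Real.sin (Real.pi/8) * Real.cos (Real.pi/8) := by
    rw [show Real.pi/4 = 2*(Real.pi/8) by ring, Real.sin_two_mul]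
  have h2 : Real.cos (Real.pi/4) = 2 * Real.cos (Real.pi/8)^2 - 1 := by
    rw [show Real.pi/4 = 2*(Real.pi/8) by ring, Real.cos_two_mul]
  rw [← h1, ← h2, Real.sin_pi_div_four, Real.cos_pi_div_four]

lemma hkeyC : 2 * ((Real.sin (Real.pi/8):ℝ):ℂ) * ((Real.cos (Real.pi/8):ℝ):ℂ)
    = 2 * ((Real.cos (Real.pi/8):ℝ):ℂ)^2 - 1 := by
  exact_mod_cast congrArg Complex.ofReal hkeyR

lemma hw : (((Real.sqrt 2 : ℝ):ℂ))⁻¹ * (((Real.sqrt 2 : ℝ):ℂ))⁻¹ = 1/2 := by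
  rw [← mul_inv, hr2]; norm_num

lemma hval (x y : Fin 2) :
    (∑ a : Fin 2, ∑ b : Fin 2,
        if a + b = x * y then (rhoBell * (chshM a x ⊗ₖ chshN b y)).trace else 0)
      = ((Real.cos (Real.pi / 8)) ^ 2 : ℝ) := by
  fin_cases x <;> fin_cases y <;>
    simp [Fin.sum_univ_two, chshM00, chshM10, chshM01, chshM11,
      chshN00, chshN10, chshN01, chshN11, trace_rho, outer, Fin.mk_zero, Fin.mk_one,
      -Real.cos_pi_div_eight, -Real.sin_pi_div_eight, -Complex.ofReal_cos,
      -Complex.ofReal_sin, Complex.ofReal_pow] <;>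
    first
      | ring1
      | (linear_combination
          ((((Real.cos (Real.pi/8):ℝ):ℂ))^2 + (((Real.sin (Real.pi/8):ℝ):ℂ))^2
            + 2*(((Real.sin (Real.pi/8):ℝ):ℂ))*(((Real.cos (Real.pi/8):ℝ):ℂ))) * hw
          + (1/2 : ℂ) * hpyth + (1/2 : ℂ) * hkeyC)

/-- the above matrices form two-outcome POVMs on `ℂ²` for each question
bit, and for every pair of questions `(x, y)`, the probability (under the Born rule with
the Bell state) that the answers `(a, b)` satisfy the CHSH winning condition
`a XOR b = x AND y` equals `cos²(π/8)`.  (On `Fin 2`, `a + b` is XOR and `x * y` is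
AND.)  In particular, with uniformly random questions this shared-entanglement strategy
wins the CHSH game with probability `cos²(π/8)`. -/

theorem chsh_quantum_strategy_value :
    (∀ x : Fin 2, (chshM 0 x).PosSemidef ∧ (chshM 1 x).PosSemidef ∧
      chshM 0 x + chshM 1 x = 1) ∧
    (∀ y : Fin 2, (chshN 0 y).PosSemidef ∧ (chshN 1 y).PosSemidef ∧
      chshN 0 y + chshN 1 y = 1) ∧
    rhoBell.PosSemidef ∧ rhoBell.trace = 1 ∧
    (∀ x y : Fin 2,
      (∑ a : Fin 2, ∑ b : Fin 2,
        if a + b = x * y then (rhoBell * (chshM a x ⊗ₖ chshN b y)).trace else 0)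
        = ((Real.cos (Real.pi / 8)) ^ 2 : ℝ)) ∧
    ((1 / 4 : ℂ) * ∑ x : Fin 2, ∑ y : Fin 2, ∑ a : Fin 2, ∑ b : Fin 2,
        (if a + b = x * y then (rhoBell * (chshM a x ⊗ₖ chshN b y)).trace else 0)
      = ((Real.cos (Real.pi / 8)) ^ 2 : ℝ)) := by
  refine ⟨?_, ?_, rho_psd, rho_trace_one, hval, ?_⟩
  · intro x; fin_cases x
    · exact ⟨chshM00 ▸ outer_psd 1 0, chshM10 ▸ outer_psd 0 1, chshM_sum 0⟩
    · exact ⟨chshM01 ▸ outer_psd rr rr, chshM11 ▸ outer_psd rr (-rr), chshM_sum 1⟩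
  · intro y; fin_cases y
    · exact ⟨chshN00 ▸ outer_psd _ _, chshN10 ▸ outer_psd _ _, chshN_sum 0⟩
    · exact ⟨chshN01 ▸ outer_psd _ _, chshN11 ▸ outer_psd _ _, chshN_sum 1⟩
  · simp only [hval]
    simp only [Fin.sum_univ_two]
    ring1
end

section
/- Every shared-randomness strategy for the CHSH game wins with probability at most 3/4. Precisely: let Λ be a finite nonempty set, let q ∈ Δ(Λ), and let p_1 : {0,1} × Λ → Δ({0,1}) and p_2 : {0,1} × Λ → Δ({0,1}) be arbitrary. Then (1/4) · Σ_{x,y∈{0,1}} Σ_{(a,b)∈{0,1}² : a XOR b = x AND y} Σ_{λ∈Λ} q(λ) p_1(x,λ)(a) p_2(y,λ)(b) ≤ 3/4. -/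
theorem chsh_inequality {A₀ A₁ B₀ B₁ : ℝ} (hA₀ : |A₀| ≤ 1) (hA₁ : |A₁| ≤ 1)
    (hB₀ : |B₀| ≤ 1) (hB₁ : |B₁| ≤ 1) :
    A₀ * B₀ + A₀ * B₁ + A₁ * B₀ - A₁ * B₁ ≤ 2 := by
  have h₀ : A₀ * (B₀ + B₁) ≤ |B₀ + B₁| :=
    (le_abs_self _).trans <| by rw [abs_mul]; exact mul_le_of_le_one_left (abs_nonneg _) hA₀
  have h₁ : A₁ * (B₀ - B₁) ≤ |B₀ - B₁| :=
    (le_abs_self _).trans <| by rw [abs_mul]; exact mul_le_of_le_one_left (abs_nonneg _) hA₁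
  have hB : |B₀ + B₁| + |B₀ - B₁| ≤ 2 := by
    rw [abs_le] at hB₀ hB₁
    cases abs_cases (B₀ + B₁) <;> cases abs_cases (B₀ - B₁) <;> linarith
  linarith

namespace IsPMF

variable {Y : Type*} [Fintype Y] {p : Y → ℝ}

theorem le_one (hp : IsPMF p) (y : Y) : p y ≤ 1 := by
  rw [← hp.2]
  exact Finset.single_le_sum (fun y _ => hp.1 y) (Finset.mem_univ y)

theorem abs_sub_le_one (hp : IsPMF p) (y y' : Y) : |p y - p y'| ≤ 1 :=
  abs_sub_le_of_nonneg_of_le (hp.1 y) (hp.le_one y) (hp.1 y') (hp.le_one y')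

theorem sum_mul_le {f : Y → ℝ} {c : ℝ} (hp : IsPMF p) (hf : ∀ y, f y ≤ c) :
    ∑ y, p y * f y ≤ c :=
  calc ∑ y, p y * f y ≤ ∑ y, p y * c :=
        Finset.sum_le_sum fun y _ => mul_le_mul_of_nonneg_left (hf y) (hp.1 y)
    _ = c := by rw [← Finset.sum_mul, hp.2, one_mul]

end IsPMF

theorem sum_ite_add_eq {u v : Fin 2 → ℝ} (hu : ∑ a, u a = 1) (hv : ∑ b, v b = 1) (c : Fin 2) :
    ∑ a : Fin 2, ∑ b : Fin 2, (if a + b = c then u a * v b else 0)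
      = (1 + (-1) ^ (c : ℕ) * ((u 0 - u 1) * (v 0 - v 1))) / 2 := by
  simp only [Fin.sum_univ_two] at hu hv ⊢
  fin_cases c <;> simp [show (1 + 1 : Fin 2) = 0 from rfl] <;>
    linear_combination (u 0 + u 1) / 2 * hv + hu / 2

/-- Four times the probability that the CHSH game is won when the players answer question `x`
resp. `y` independently according to `u x` resp. `v y`. -/
def chshWinValue (u v : Fin 2 → Fin 2 → ℝ) : ℝ :=
  ∑ x, ∑ y, ∑ a, ∑ b, if a + b = x * y then u x a * v y b else 0

theorem chshWinValue_le_three {u v : Fin 2 → Fin 2 → ℝ} (hu : ∀ x, IsPMF (u x))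
    (hv : ∀ y, IsPMF (v y)) : chshWinValue u v ≤ 3 := by
  have hu₁ x : ∑ a, u x a = 1 := (hu x).2
  have hv₁ y : ∑ b, v y b = 1 := (hv y).2
  simp only [chshWinValue, sum_ite_add_eq, hu₁, hv₁]
  simp only [Fin.sum_univ_two]
  norm_num
  linarith [chsh_inequality ((hu 0).abs_sub_le_one 0 1) ((hu 1).abs_sub_le_one 0 1)
    ((hv 0).abs_sub_le_one 0 1) ((hv 1).abs_sub_le_one 0 1)]

theorem sum_mul_chshWinValue {Λ : Type*} [Fintype Λ] (q : Λ → ℝ)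
    (p₁ p₂ : Fin 2 → Λ → Fin 2 → ℝ) :
    ∑ lam, q lam * chshWinValue (fun x => p₁ x lam) (fun y => p₂ y lam)
      = ∑ x : Fin 2, ∑ y : Fin 2, ∑ a : Fin 2, ∑ b : Fin 2,
          (if a + b = x * y then ∑ lam, q lam * p₁ x lam a * p₂ y lam b else 0) := by
  simp only [chshWinValue, Finset.mul_sum, mul_ite, mul_zero, ← mul_assoc, Finset.ite_sum_zero]
  refine Finset.sum_comm.trans (Finset.sum_congr rfl fun x _ => ?_)
  refine Finset.sum_comm.trans (Finset.sum_congr rfl fun y _ => ?_)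
  refine Finset.sum_comm.trans (Finset.sum_congr rfl fun a _ => ?_)
  exact Finset.sum_comm

theorem chsh_classical_bound_general {Λ : Type} [Fintype Λ]
    (q : Λ → ℝ) (hq : IsPMF q)
    (p₁ p₂ : Fin 2 → Λ → Fin 2 → ℝ)
    (hp₁ : ∀ x lam, IsPMF (p₁ x lam)) (hp₂ : ∀ y lam, IsPMF (p₂ y lam)) :
    (1 / 4 : ℝ) * ∑ x : Fin 2, ∑ y : Fin 2, ∑ a : Fin 2, ∑ b : Fin 2,
        (if a + b = x * y then ∑ lam, q lam * p₁ x lam a * p₂ y lam b else 0)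
      ≤ 3 / 4 := by
  rw [← sum_mul_chshWinValue]
  have h := hq.sum_mul_le fun lam => chshWinValue_le_three (hp₁ · lam) (hp₂ · lam)
  linarith

/-- every shared-randomness strategy for the CHSH game wins with
probability at most 3/4.  Here `Λ` is a finite nonempty set, `q ∈ Δ(Λ)` is the shared
randomness, and `p₁ x λ`, `p₂ y λ` are the players' local response distributions; on
`Fin 2`, `a + b` is XOR and `x * y` is AND, so `a + b = x * y` is the CHSH winning
condition. -/
theorem chsh_classical_bound {Λ : Type} [Fintype Λ] [Nonempty Λ]
    (q : Λ → ℝ) (hq : IsPMF q)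
    (p₁ p₂ : Fin 2 → Λ → Fin 2 → ℝ)
    (hp₁ : ∀ x lam, IsPMF (p₁ x lam)) (hp₂ : ∀ y lam, IsPMF (p₂ y lam)) :
    (1 / 4 : ℝ) * ∑ x : Fin 2, ∑ y : Fin 2, ∑ a : Fin 2, ∑ b : Fin 2,
        (if a + b = x * y then ∑ lam, q lam * p₁ x lam a * p₂ y lam b else 0)
      ≤ 3 / 4 :=
  chsh_classical_bound_general q hq p₁ p₂ hp₁ hp₂
end

section
/- Shared-entanglement policies strictly contain shared-randomness policies (Bell inequality violation). Precisely: with ρ_Bell, M(a|x), N(b|y) as follows — ρ_Bell the 4×4 matrix with entries 1/2 at positions (1,1), (1,4), (4,1), (4,4) and 0 elsewhere; θ = π/8; M(0|0) = [[1,0],[0,0]], M(1|0) = [[0,0],[0,1]], M(0|1) = [[1/2,1/2],[1/2,1/2]], M(1|1) = [[1/2,−1/2],[−1/2,1/2]]; N(0|0) = [[cos²θ, cosθ·sinθ],[cosθ·sinθ, sin²θ]], N(1|0) = I_2 − N(0|0), N(0|1) = [[cos²θ, −cosθ·sinθ],[−cosθ·sinθ, sin²θ]], N(1|1) = I_2 −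 N(0|1) — define p(a,b|x,y) = tr(ρ_Bell (M(a|x) ⊗ N(b|y))) for a,b,x,y ∈ {0,1}. Then there do NOT exist a finite nonempty set Λ, a distribution q ∈ Δ(Λ), and functions p_1 : {0,1} × Λ → Δ({0,1}), p_2 : {0,1} × Λ → Δ({0,1}) such that p(a,b|x,y) = Σ_{λ∈Λ} q(λ) p_1(x,λ)(a) p_2(y,λ)(b) for all a, b, x, y ∈ {0,1}. -/
/-!
In a shared-randomness model each correlator `E(x, y) = ∑_{a,b} (-1)^(a+b) p(a,b|x,y)` is the
`q`-average of products `α_x(λ) β_y(λ)` of local biases `α_x(λ) = p₁(x,λ)(0) - p₁(x,λ)(1)`,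
`β_y(λ) = p₂(y,λ)(0) - p₂(y,λ)(1)` lying in `[-1, 1]`, so the CHSH combination
`E(0,0) + E(0,1) + E(1,0) - E(1,1)` is at most `2`. For the Bell state, `E(x, y)` is the
expectation of `A_x ⊗ B_y` with `A_x = M(0|x) - M(1|x) ∈ {Z, X}` and
`B_y = N(0|y) - N(1|y) = (Z ± X)/√2`, which makes every correlator `±√2/2` and the CHSH
combination `2√2 > 2`.
-/

open scoped ComplexOrder Kronecker
open Matrix

theorem Matrix.sub_kronecker {α l m n p : Type*} [NonUnitalNonAssocRing α]
    (A₁ A₂ : Matrix l m α) (B : Matrix n p α) : (A₁ - A₂) ⊗ₖ B = A₁ ⊗ₖ B - A₂ ⊗ₖ B := by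
  ext; simp [sub_mul]

theorem Matrix.kronecker_sub {α l m n p : Type*} [NonUnitalNonAssocRing α]
    (A : Matrix l m α) (B₁ B₂ : Matrix n p α) : A ⊗ₖ (B₁ - B₂) = A ⊗ₖ B₁ - A ⊗ₖ B₂ := by
  ext; simp [mul_sub]

theorem IsPMF.abs_sub_le_one_s13 {p : Fin 2 → ℝ} (hp : IsPMF p) : |p 0 - p 1| ≤ 1 := by
  obtain ⟨hnonneg, hsum⟩ := hp
  rw [Fin.sum_univ_two] at hsum
  rw [abs_le]
  constructor <;> linarith [hnonneg 0, hnonneg 1]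

theorem IsPMF.sum_mul_le_s13 {Λ : Type*} [Fintype Λ] {q f : Λ → ℝ} {C : ℝ} (hq : IsPMF q)
    (hf : ∀ l, f l ≤ C) : ∑ l, q l * f l ≤ C :=
  calc ∑ l, q l * f l ≤ ∑ l, q l * C :=
        Finset.sum_le_sum fun l _ => mul_le_mul_of_nonneg_left (hf l) (hq.1 l)
    _ = C := by rw [← Finset.sum_mul, hq.2, one_mul]

theorem chsh_le_two_of_abs_le_one {a₀ a₁ b₀ b₁ : ℝ} (ha₀ : |a₀| ≤ 1) (ha₁ : |a₁| ≤ 1)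
    (hb₀ : |b₀| ≤ 1) (hb₁ : |b₁| ≤ 1) : a₀ * b₀ + a₀ * b₁ + a₁ * b₀ - a₁ * b₁ ≤ 2 :=
  calc a₀ * b₀ + a₀ * b₁ + a₁ * b₀ - a₁ * b₁ = a₀ * (b₀ + b₁) + a₁ * (b₀ - b₁) := by ring
    _ ≤ |a₀| * |b₀ + b₁| + |a₁| * |b₀ - b₁| := by
        rw [← abs_mul, ← abs_mul]
        exact add_le_add (le_abs_self _) (le_abs_self _)
    _ ≤ |b₀ + b₁| + |b₀ - b₁| :=
        add_le_add (mul_le_of_le_one_left (abs_nonneg _) ha₀)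
          (mul_le_of_le_one_left (abs_nonneg _) ha₁)
    _ ≤ 2 := by
        rw [abs_le] at hb₀ hb₁
        rcases abs_cases (b₀ + b₁) with ⟨_, _⟩ | ⟨_, _⟩ <;>
          rcases abs_cases (b₀ - b₁) with ⟨_, _⟩ | ⟨_, _⟩ <;> linarith

section CHSH

variable {R : Type*}

/-- `P a b x y` is the probability of outputs `a, b` on inputs `x, y`. -/
def correlator [AddCommGroup R] (P : Fin 2 → Fin 2 → Fin 2 → Fin 2 → R) (x y : Fin 2) : R :=
  P 0 0 x y - P 0 1 x y - P 1 0 x y + P 1 1 x y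

def chshValue [AddCommGroup R] (P : Fin 2 → Fin 2 → Fin 2 → Fin 2 → R) : R :=
  correlator P 0 0 + correlator P 0 1 + correlator P 1 0 - correlator P 1 1

def localBehaviour {Λ : Type*} [Fintype Λ] (q : Λ → ℝ) (p₁ p₂ : Fin 2 → Λ → Fin 2 → ℝ)
    (a b x y : Fin 2) : ℝ :=
  ∑ l, q l * p₁ x l a * p₂ y l b

theorem correlator_localBehaviour {Λ : Type*} [Fintype Λ] (q : Λ → ℝ)
    (p₁ p₂ : Fin 2 → Λ → Fin 2 → ℝ) (x y : Fin 2) :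
    correlator (localBehaviour q p₁ p₂) x y
      = ∑ l, q l * ((p₁ x l 0 - p₁ x l 1) * (p₂ y l 0 - p₂ y l 1)) := by
  simp only [correlator, localBehaviour, ← Finset.sum_sub_distrib, ← Finset.sum_add_distrib]
  exact Finset.sum_congr rfl fun l _ => by ring

theorem chshValue_localBehaviour_le_two {Λ : Type*} [Fintype Λ] {q : Λ → ℝ}
    {p₁ p₂ : Fin 2 → Λ → Fin 2 → ℝ} (hq : IsPMF q) (hp₁ : ∀ x l, IsPMF (p₁ x l))
    (hp₂ : ∀ y l, IsPMF (p₂ y l)) :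
    chshValue (localBehaviour q p₁ p₂) ≤ 2 := by
  simp only [chshValue, correlator_localBehaviour, ← Finset.sum_sub_distrib,
    ← Finset.sum_add_distrib]
  convert hq.sum_mul_le_s13 fun l => chsh_le_two_of_abs_le_one
    (hp₁ 0 l).abs_sub_le_one_s13 (hp₁ 1 l).abs_sub_le_one_s13
    (hp₂ 0 l).abs_sub_le_one_s13 (hp₂ 1 l).abs_sub_le_one_s13 using 2 with l
  ring

theorem correlator_trace_mul_kronecker [Ring R] {l m : Type*} [Fintype l] [Fintype m]
    (ρ : Matrix (l × m) (l × m) R) (M : Fin 2 → Fin 2 → Matrix l l R)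
    (N : Fin 2 → Fin 2 → Matrix m m R) (x y : Fin 2) :
    correlator (fun a b x y => (ρ * (M a x ⊗ₖ N b y)).trace) x y
      = (ρ * ((M 0 x - M 1 x) ⊗ₖ (N 0 y - N 1 y))).trace := by
  simp only [correlator, sub_kronecker, kronecker_sub, Matrix.mul_sub, trace_sub]
  abel

end CHSH

theorem trace_rhoBell_mul_kronecker (A B : Matrix (Fin 2) (Fin 2) ℂ) :
    (rhoBell * (A ⊗ₖ B)).trace = (∑ i, ∑ j, A i j * B i j) / 2 := by
  simp [Matrix.trace, Matrix.mul_apply, Fintype.sum_prod_type, Fin.sum_univ_two, rhoBell]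
  ring

theorem chshM_sub_chshM (x : Fin 2) :
    chshM 0 x - chshM 1 x = if x = 0 then !![1, 0; 0, -1] else !![0, 1; 1, 0] := by
  fin_cases x <;> (ext i j; fin_cases i <;> fin_cases j <;> simp [chshM]) <;> norm_num

theorem chshN_sub_chshN (y : Fin 2) :
    chshN 0 y - chshN 1 y
      = (√2 / 2 : ℂ) • if y = 0 then !![1, 1; 1, -1] else !![1, -1; -1, -1] := by
  have hcos : 2 * Real.cos (Real.pi / 8) ^ 2 - 1 = √2 / 2 := by
    rw [← Real.cos_two_mul, ← Real.cos_pi_div_four]; ring_nf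
  have hsin : 2 * Real.sin (Real.pi / 8) * Real.cos (Real.pi / 8) = √2 / 2 := by
    rw [← Real.sin_two_mul, ← Real.sin_pi_div_four]; ring_nf
  have hcos' : 2 * (Real.cos (Real.pi / 8) : ℂ) ^ 2 - 1 = √2 / 2 := by exact_mod_cast hcos
  have hsin' : 2 * (Real.sin (Real.pi / 8) : ℂ) * Real.cos (Real.pi / 8) = √2 / 2 := by
    exact_mod_cast hsin
  have hpyth : (Real.sin (Real.pi / 8) : ℂ) ^ 2 + Real.cos (Real.pi / 8) ^ 2 = 1 := by
    exact_mod_cast Real.sin_sq_add_cos_sq (Real.pi / 8)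
  fin_cases y <;> (ext i j; fin_cases i <;> fin_cases j) <;>
    simp [chshN, -Complex.ofReal_cos, -Complex.ofReal_sin, -Real.cos_pi_div_eight,
      -Real.sin_pi_div_eight]
  all_goals first
    | linear_combination hcos' | linear_combination hsin' | linear_combination -hsin'
    | linear_combination 2 * hpyth - hcos'

theorem chshValue_bell :
    chshValue (fun a b x y => (rhoBell * (chshM a x ⊗ₖ chshN b y)).trace) = 2 * √2 := by
  rw [chshValue]
  simp only [correlator_trace_mul_kronecker]
  simp only [chshM_sub_chshM, chshN_sub_chshN, kronecker_smul, Matrix.mul_smul, trace_smul,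
    trace_rhoBell_mul_kronecker]
  norm_num [Fin.sum_univ_two]
  ring

/-- Bell inequality violation: the bipartite conditional distribution
`p(a,b|x,y) = tr(ρ_Bell (M(a|x) ⊗ N(b|y)))` produced by the CHSH shared-entanglement
strategy cannot be reproduced by any shared-randomness (local hidden variable) model:
there are no finite nonempty `Λ`, `q ∈ Δ(Λ)` and local response distributions
`p₁, p₂` with `p(a,b|x,y) = ∑ λ, q λ * p₁ x λ a * p₂ y λ b` for all `a, b, x, y`. -/
theorem chsh_strategy_not_sharedRandomness :
    ¬ ∃ (Λ : Type) (_ : Fintype Λ) (_ : Nonempty Λ) (q : Λ → ℝ)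
        (p₁ p₂ : Fin 2 → Λ → Fin 2 → ℝ),
        IsPMF q ∧ (∀ x lam, IsPMF (p₁ x lam)) ∧ (∀ y lam, IsPMF (p₂ y lam)) ∧
        ∀ a b x y : Fin 2,
          (rhoBell * (chshM a x ⊗ₖ chshN b y)).trace
            = ((∑ lam, q lam * p₁ x lam a * p₂ y lam b : ℝ) : ℂ) := by
  rintro ⟨Λ, _, _, q, p₁, p₂, hq, hp₁, hp₂, h⟩
  have hbell := chshValue_bell
  simp only [h] at hbell
  have hvalue : chshValue (localBehaviour q p₁ p₂) = 2 * √2 := by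
    rw [← Complex.ofReal_inj, Complex.ofReal_mul, Complex.ofReal_ofNat, ← hbell]
    simp [chshValue, correlator, localBehaviour]
  linarith [chshValue_localBehaviour_le_two hq hp₁ hp₂, Real.one_lt_sqrt_two]
end

section
/- Let k ≤ d and let (M(a))_{a∈{1,...,k}} be a POVM on ℂ^d in which each M(a) is a nonzero orthogonal projection (Hermitian with M(a)² = M(a)) and the projections are pairwise orthogonal (M(a)M(a') = 0 for a ≠ a') with Σ_a M(a) = I_d. Then there do NOT exist an integer m with 1 ≤ m < k, a stochastic matrix P : {1,...,k} × {1,...,m} → ℝ (P_{ab} ≥ 0, Σ_b P_{ab} = 1 for every a), and a POVM (M̃(b))_{b∈{1,...,m}} on ℂ^d, such that M(a) = Σ_{b=1}^m P_{ab} M̃(b) for all a. -/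
open scoped ComplexOrder
open Matrix

/-- A POVM on `ℂ^d` with outcomes indexed by a finite type `B`. -/
def IsPOVMFam {d : ℕ} {B : Type*} [Fintype B] (M : B → Matrix (Fin d) (Fin d) ℂ) : Prop :=
  (∀ b, (M b).PosSemidef) ∧ ∑ b, M b = 1

/-!
Every outcome `a` receives a positive weight `P a b` from some nonzero effect `Mt b`, so
`P a b • Mt b ≤ M a` in the Loewner order. Since `(A, B) ↦ tr (A * B)` is monotone on positive
matrices, two outcomes `a ≠ a'` sharing such a `b` would give
`0 < P a b * P a' b * tr (Mt b * Mt b) ≤ tr (M a * M a') = 0`. Hence `a ↦ b` is injective and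
`k ≤ m`.
-/

open scoped MatrixOrder

variable {n 𝕜 : Type*} [RCLike 𝕜]

theorem smul_le_sum_smul {κ : Type*} [Fintype κ] {P : κ → 𝕜} {N : κ → Matrix n n 𝕜}
    (hP : ∀ b, 0 ≤ P b) (hN : ∀ b, 0 ≤ N b) (b : κ) : P b • N b ≤ ∑ b', P b' • N b' :=
  Finset.single_le_sum (fun b' _ => ((hN b').posSemidef.smul (hP b')).nonneg) (Finset.mem_univ b)

variable [Fintype n]

namespace Matrix

theorem trace_mul_nonneg {A B : Matrix n n 𝕜} (hA : 0 ≤ A) (hB : 0 ≤ B) :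
    0 ≤ (A * B).trace := by
  classical
  obtain ⟨C, rfl⟩ := CStarAlgebra.nonneg_iff_eq_star_mul_self.mp hA
  rw [mul_assoc, trace_mul_comm]
  exact (star_right_conjugate_nonneg hB C).posSemidef.trace_nonneg

theorem trace_mul_le_trace_mul {A A' B B' : Matrix n n 𝕜} (hA : 0 ≤ A) (hAA' : A ≤ A')
    (hB : 0 ≤ B) (hBB' : B ≤ B') : (A * B).trace ≤ (A' * B').trace := by
  have hsplit : (A' * B').trace =
      ((A' - A) * B').trace + (A * (B' - B)).trace + (A * B).trace := by
    simp only [sub_mul, mul_sub, trace_sub]; ring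
  have h1 := trace_mul_nonneg (sub_nonneg.mpr hAA') (hB.trans hBB')
  have h2 := trace_mul_nonneg hA (sub_nonneg.mpr hBB')
  rw [hsplit]
  linear_combination h1 + h2

theorem IsHermitian.trace_mul_self_pos {A : Matrix n n 𝕜} (hA : A.IsHermitian) (h : A ≠ 0) :
    0 < (A * A).trace := by
  have hpos := (posSemidef_conjTranspose_mul_self A).trace_nonneg.lt_of_ne'
    (trace_conjTranspose_mul_self_eq_zero_iff.not.mpr h)
  rwa [hA.eq] at hpos

theorem trace_mul_pos_of_smul_le {N A B : Matrix n n 𝕜} {p q : 𝕜} (hN : 0 ≤ N)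
    (hN0 : N ≠ 0) (hp : 0 < p) (hq : 0 < q) (hpA : p • N ≤ A) (hqB : q • N ≤ B) :
    0 < (A * B).trace := by
  have hpN : 0 ≤ p • N := (hN.posSemidef.smul hp.le).nonneg
  have hqN : 0 ≤ q • N := (hN.posSemidef.smul hq.le).nonneg
  calc 0 < p * q * (N * N).trace :=
        mul_pos (mul_pos hp hq) (hN.posSemidef.isHermitian.trace_mul_self_pos hN0)
    _ = (p • N * q • N).trace := by simp only [smul_mul_smul, trace_smul, smul_eq_mul]
    _ ≤ (A * B).trace := trace_mul_le_trace_mul hpN hpA hqN hqB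

end Matrix

theorem card_le_card_of_eq_sum_smul {ι κ : Type*} [Fintype ι] [Fintype κ]
    {M : ι → Matrix n n 𝕜} {P : ι → κ → 𝕜} {N : κ → Matrix n n 𝕜} (hP : ∀ a b, 0 ≤ P a b)
    (hN : ∀ b, 0 ≤ N b) (hM : ∀ a, M a = ∑ b, P a b • N b) (hM0 : ∀ a, M a ≠ 0)
    (hMM : Pairwise fun a a' => M a * M a' = 0) : Fintype.card ι ≤ Fintype.card κ := by
  have hsupp : ∀ a, ∃ b, P a b ≠ 0 ∧ N b ≠ 0 := by
    intro a
    by_contra! h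
    refine hM0 a ((hM a).trans (Finset.sum_eq_zero fun b _ => ?_))
    by_cases hb : P a b = 0
    · rw [hb, zero_smul]
    · rw [h b hb, smul_zero]
  choose f hfP hfN using hsupp
  have hpos a : 0 < P a (f a) := (hP a _).lt_of_ne' (hfP a)
  have hle a : P a (f a) • N (f a) ≤ M a := hM a ▸ smul_le_sum_smul (hP a) hN (f a)
  refine Fintype.card_le_of_injective f fun a a' hf => ?_
  by_contra hne
  obtain ⟨hpos', hle'⟩ : 0 < P a' (f a) ∧ P a' (f a) • N (f a) ≤ M a' := hf ▸ ⟨hpos a', hle a'⟩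
  have htrace := trace_mul_pos_of_smul_le (hN (f a)) (hfN a) (hpos a) hpos' (hle a) hle'
  rw [hMM hne, trace_zero] at htrace
  exact htrace.false

theorem projective_povm_not_coarse_grainable_general {k d : ℕ}
    (M : Fin k → Matrix (Fin d) (Fin d) ℂ)
    (hNe : ∀ a, M a ≠ 0)
    (hOrth : ∀ a a' : Fin k, a ≠ a' → M a * M a' = 0) :
    ¬ ∃ (m : ℕ) (_ : 1 ≤ m) (_ : m < k) (P : Fin k → Fin m → ℝ)
        (Mt : Fin m → Matrix (Fin d) (Fin d) ℂ),
        (∀ a b, 0 ≤ P a b) ∧ (∀ a, ∑ b, P a b = 1) ∧ IsPOVMFam Mt ∧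
        ∀ a, M a = ∑ b, ((P a b : ℝ) : ℂ) • Mt b := by
  rintro ⟨m, -, hmk, P, Mt, hP, -, ⟨hMt, -⟩, hM⟩
  have hkm := card_le_card_of_eq_sum_smul (fun a b => Complex.zero_le_real.mpr (hP a b))
    (fun b => (hMt b).nonneg) hM hNe hOrth
  simp only [Fintype.card_fin] at hkm
  omega

/-- let `k ≤ d` and let `(M a)_{a < k}` be a POVM on `ℂ^d` consisting of
nonzero pairwise-orthogonal (Hermitian) projections summing to the identity.  Then `M`
cannot be obtained by stochastic post-processing of a POVM with fewer than `k`
outcomes. -/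
theorem projective_povm_not_coarse_grainable {k d : ℕ} (hkd : k ≤ d)
    (M : Fin k → Matrix (Fin d) (Fin d) ℂ)
    (hHerm : ∀ a, (M a).IsHermitian)
    (hProj : ∀ a, M a * M a = M a)
    (hNe : ∀ a, M a ≠ 0)
    (hOrth : ∀ a a' : Fin k, a ≠ a' → M a * M a' = 0)
    (hSum : ∑ a, M a = 1) :
    ¬ ∃ (m : ℕ) (_ : 1 ≤ m) (_ : m < k) (P : Fin k → Fin m → ℝ)
        (Mt : Fin m → Matrix (Fin d) (Fin d) ℂ),
        (∀ a b, 0 ≤ P a b) ∧ (∀ a, ∑ b, P a b = 1) ∧ IsPOVMFam Mt ∧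
        ∀ a, M a = ∑ b, ((P a b : ℝ) : ℂ) • Mt b :=
  projective_povm_not_coarse_grainable_general M hNe hOrth
end
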